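/- Let v : List Bool and let x_1, ..., x_k be positive integers. Suppose there exist lists p_1, q_1, ..., p_k, q_k : List Bool such that for each i, v = p_i ++ [false] ++ List.replicate x_i true ++ [false] ++ q_i, the index intervals [p_i.length + 1, p_i.length + 1 + x_i) occupied by the k true-blocks are pairwise disjoint, and v.count true = x_1 + ... + x_k. Then the multiset of entries of trueRuns v equals the multiset {x_1, ..., x_k}; i.e., if the verifier has seen k pairwise disjoint flanked black blocks of lengths x_1, ..., x_k and there are no black cells outside them, then the maximal black blocks of v are exactly these k blocks (Phase 1 soundness). -/

import Mathlib

namespace List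

private theorem myloop_eq_append {α} {r : α → α → Bool} {l : List α} {a : α} {g : List α}
    (gs : List (List α)) : splitBy.loop r l a g gs = gs.reverse ++ splitBy.loop r l a g [] := by
  induction l generalizing a g gs with
  | nil => simp [splitBy.loop]
  | cons b l IH =>
    simp_rw [splitBy.loop]
    split <;> rw [IH]
    conv_rhs => rw [IH]
    simp

private theorem myloop_g {α} {r : α → α → Bool} : ∀ (l : List α) (a : α) (g : List α),
    splitBy.loop r l a g [] = (splitBy.loop r l a [] []).modifyHead (g.reverse ++ ·) := by
  intro l
  induction l with
  | nil => intro a g; simp [splitBy.loop]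
  | cons b l IH =>
    intro a g
    rw [splitBy.loop, splitBy.loop]
    cases h : r a b
    · simp only [h, myloop_eq_append [(a :: g).reverse], myloop_eq_append [[a].reverse]]
      simp
    · simp only [h, IH b (a :: g), IH b [a]]
      generalize splitBy.loop r l b [] [] = L
      cases L with
      | nil => simp
      | cons x xs => simp

private theorem my_splitBy_cons_cons {α} (r : α → α → Bool) (a b : α) (l : List α) :
    splitBy r (a :: b :: l) =
      if r a b then (splitBy r (b :: l)).modifyHead (a :: ·) else [a] :: splitBy r (b :: l) := by
  show splitBy.loop r (b :: l) a [] [] = _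
  rw [splitBy.loop]
  cases h : r a b
  · simp only [h]
    rw [myloop_eq_append [[a].reverse]]
    rfl
  · simp only [h, myloop_g l b [a]]
    rfl

private theorem splitBy_cons_exists {α} (r : α → α → Bool) (a : α) (w : List α) :
    ∃ G Gs, splitBy r (a :: w) = (a :: G) :: Gs := by
  cases h : splitBy r (a :: w) with
  | nil =>
    have := flatten_splitBy r (a :: w)
    rw [h] at this
    simp at this
  | cons G Gs =>
    have hG : G ≠ [] := ne_nil_of_mem_splitBy (h ▸ mem_cons_self)
    cases G with
    | nil => exact absurd rfl hG
    | cons c G' =>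
      have h2 := flatten_splitBy r (a :: w)
      rw [h] at h2
      simp only [flatten_cons, cons_append] at h2
      injection h2 with h3 _
      subst h3
      exact ⟨G', Gs, rfl⟩

end List


/-- The list of lengths of the maximal blocks of consecutive `true` entries of a
Boolean list, in order from left to right. -/
def trueRuns (w : List Bool) : List ℕ :=
  ((w.splitBy (· = ·)).filter (fun g => true ∈ g)).map List.length


private theorem all_false_of_chain' : ∀ (l : List Bool),
    List.Chain' (fun x y : Bool => x = y) (false :: l) → true ∉ false :: l := by
  intro l
  induction l with
  | nil => simp
  | cons c l IH =>
    intro h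
    change List.IsChain _ (false :: c :: l) at h
    rw [List.isChain_cons_cons] at h
    obtain ⟨h1, h2⟩ := h
    subst h1
    simpa using IH h2

private theorem head_group_all_false {w G : List Bool} {Gs : List (List Bool)}
    (h : (false :: w).splitBy (· = ·) = (false :: G) :: Gs) : true ∉ false :: G := by
  have hm : (false :: G) ∈ (false :: w).splitBy (· = ·) := h ▸ List.mem_cons_self
  have hc := List.isChain_of_mem_splitBy hm
  exact all_false_of_chain' G (hc.imp fun {a b} hab => by simpa using hab)

private theorem trueRuns_of_not_mem {w : List Bool} (h : true ∉ w) : trueRuns w = [] := by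
  unfold trueRuns
  rw [List.map_eq_nil_iff, List.filter_eq_nil_iff]
  intro g hg hmem
  simp only [decide_eq_true_eq] at hmem
  exact h (by
    rw [← List.flatten_splitBy (· = ·) w]
    exact List.mem_flatten.2 ⟨g, hg, hmem⟩)

private theorem trueRuns_false_cons (w : List Bool) : trueRuns (false :: w) = trueRuns w := by
  cases w with
  | nil => rfl
  | cons b w =>
    cases b
    · obtain ⟨G, Gs, hG⟩ := List.splitBy_cons_exists (· = ·) false w
      have hnot := head_group_all_false hG
      unfold trueRuns
      rw [List.my_splitBy_cons_cons, hG]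
      have h1 : (decide (true ∈ false :: false :: G)) = false := by
        simp only [decide_eq_false_iff_not, List.mem_cons]
        simpa using hnot
      have h2 : (decide (true ∈ false :: G)) = false := by
        simpa using hnot
      simp [List.filter_cons, h1, h2, show true ∉ G from fun hh => hnot (List.mem_cons_of_mem _ hh)]
    · unfold trueRuns
      rw [List.my_splitBy_cons_cons]
      simp [List.filter_cons]

private theorem trueRuns_one (w : List Bool) : trueRuns (true :: false :: w) = 1 :: trueRuns w := by
  have h := trueRuns_false_cons w
  unfold trueRuns at h ⊢
  rw [List.my_splitBy_cons_cons, if_neg (by simp)]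
  simp only [List.filter_cons]
  simp [h]

private theorem trueRuns_true_true (w : List Bool) :
    trueRuns (true :: true :: w) =
      ((trueRuns (true :: w)).headI + 1) :: (trueRuns (true :: w)).tail := by
  obtain ⟨G, Gs, hG⟩ := List.splitBy_cons_exists (· = ·) true w
  unfold trueRuns
  rw [List.my_splitBy_cons_cons, hG]
  simp [List.filter_cons]

private theorem trueRuns_replicate (n : ℕ) (w : List Bool) :
    trueRuns (List.replicate (n + 1) true ++ false :: w) = (n + 1) :: trueRuns w := by
  induction n with
  | zero => simpa using trueRuns_one w
  | succ n IH =>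
    have h : List.replicate (n + 2) true ++ false :: w
        = true :: true :: (List.replicate n true ++ false :: w) := by
      simp [List.replicate_succ]
    have h2 : List.replicate (n + 1) true ++ false :: w
        = true :: (List.replicate n true ++ false :: w) := by
      simp [List.replicate_succ]
    rw [h, trueRuns_true_true, ← h2, IH]
    simp

private theorem trueRuns_prefix_false : ∀ {p : List Bool}, true ∉ p → ∀ (w : List Bool),
    trueRuns (p ++ w) = trueRuns w := by
  intro p
  induction p with
  | nil => intro _ w; rfl
  | cons a p IH =>
    intro hp w
    have ha : a = false := by
      cases a
      · rfl
      · exact absurd List.mem_cons_self hp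
    subst ha
    rw [List.cons_append, trueRuns_false_cons]
    exact IH (fun hh => hp (List.mem_cons_of_mem _ hh)) w

private def Iv (t : List Bool × ℕ) : Finset ℕ :=
  Finset.Ico (t.1.length + 1) (t.1.length + 1 + t.2)

private def Flanked (v : List Bool) (t : List Bool × ℕ) : Prop :=
  ∃ q, v = t.1 ++ [false] ++ List.replicate t.2 true ++ [false] ++ q

private theorem disj_iff {a b m n : ℕ} (hm : 0 < m) (hn : 0 < n) :
    Disjoint (Finset.Ico (a + 1) (a + 1 + m)) (Finset.Ico (b + 1) (b + 1 + n))
      ↔ (a + m ≤ b ∨ b + n ≤ a) := by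
  rw [Finset.disjoint_left]
  constructor
  · intro h
    by_contra hc
    push_neg at hc
    exact h (a := max (a + 1) (b + 1)) (Finset.mem_Ico.2 (by omega)) (Finset.mem_Ico.2 (by omega))
  · intro h x hx hx'
    rw [Finset.mem_Ico] at hx hx'
    omega

private theorem step_lemma (L : List (List Bool × ℕ)) (v : List Bool)
    (hx : ∀ t ∈ L, 0 < t.2) (hfl : ∀ t ∈ L, Flanked v t)
    (hdisj : L.Pairwise fun s t => Disjoint (Iv s) (Iv t))
    (hne : L ≠ []) :
    ∃ (t : List Bool × ℕ) (L₁ L₂ : List (List Bool × ℕ)) (q : List Bool),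
      L = L₁ ++ t :: L₂ ∧
      v = t.1 ++ [false] ++ List.replicate t.2 true ++ [false] ++ q ∧
      (∀ s ∈ (L₁ ++ L₂).map (fun s => (s.1.drop (t.1.length + 1 + t.2), s.2)), 0 < s.2) ∧
      (∀ s ∈ (L₁ ++ L₂).map (fun s => (s.1.drop (t.1.length + 1 + t.2), s.2)),
        Flanked (false :: q) s) ∧
      ((L₁ ++ L₂).map (fun s => (s.1.drop (t.1.length + 1 + t.2), s.2))).Pairwise
        (fun s t => Disjoint (Iv s) (Iv t)) := by
  classical
  obtain ⟨t, ht⟩ : ∃ t, t ∈ List.argmin (fun s => s.1.length) L := by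
    cases h : List.argmin (fun s : List Bool × ℕ => s.1.length) L with
    | none => exact absurd (List.argmin_eq_none.1 h) hne
    | some t => exact ⟨t, by simp [h]⟩
  have htL : t ∈ L := List.argmin_mem ht
  have hmin : ∀ s ∈ L, t.1.length ≤ s.1.length := fun s hs => List.le_of_mem_argmin (f := fun s : List Bool × ℕ => s.1.length) hs ht
  obtain ⟨L₁, L₂, rfl⟩ := List.append_of_mem htL
  have hpm : (t :: (L₁ ++ L₂)).Pairwise (fun s t => Disjoint (Iv s) (Iv t)) :=
    (List.pairwise_middle (fun h => h.symm)).1 hdisj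
  rw [List.pairwise_cons] at hpm
  obtain ⟨htd, hMd⟩ := hpm
  obtain ⟨q, hq⟩ := hfl t htL
  set d := t.1.length + 1 + t.2 with hd
  have hmemL : ∀ s ∈ L₁ ++ L₂, s ∈ L₁ ++ t :: L₂ := by
    intro s hs
    rcases List.mem_append.1 hs with h | h
    · exact List.mem_append.2 (Or.inl h)
    · exact List.mem_append.2 (Or.inr (List.mem_cons_of_mem _ h))
  have hdropv : v.drop d = false :: q := by
    have hv : v = (t.1 ++ [false] ++ List.replicate t.2 true) ++ (false :: q) := by
      rw [hq]; simp
    rw [hv, show d = (t.1 ++ [false] ++ List.replicate t.2 true).length by simp [hd]; omega]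
    exact List.drop_left
  have hlen : ∀ s ∈ L₁ ++ L₂, d ≤ s.1.length := by
    intro s hs
    have hsL := hmemL s hs
    have hts := htd s hs
    rw [Iv, Iv, disj_iff (hx t htL) (hx s hsL)] at hts
    have hmins := hmin s hsL
    have hle : t.1.length + t.2 ≤ s.1.length := by
      rcases hts with h | h
      · exact h
      · have := hx s hsL; omega
    rcases Nat.lt_or_ge s.1.length d with hlt | hge
    · exfalso
      have heq : s.1.length = t.1.length + t.2 := by omega
      obtain ⟨qs, hqs⟩ := hfl s hsL
      have h1 : v.drop (s.1.length + 1) = List.replicate s.2 true ++ ([false] ++ qs) := by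
        have hv2 : v = (s.1 ++ [false]) ++ (List.replicate s.2 true ++ ([false] ++ qs)) := by
          rw [hqs]; simp
        rw [hv2, show s.1.length + 1 = (s.1 ++ [false]).length by simp]
        exact List.drop_left
      have h2 : v.drop (s.1.length + 1) = false :: q := by
        rw [show s.1.length + 1 = d by omega]
        exact hdropv
      obtain ⟨m, hm⟩ := Nat.exists_eq_succ_of_ne_zero (show s.2 ≠ 0 by have := hx s hsL; omega)
      rw [h2, hm, List.replicate_succ] at h1
      simp at h1
    · exact hge
  refine ⟨t, L₁, L₂, q, rfl, hq, ?_, ?_, ?_⟩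
  · intro s hs
    obtain ⟨u, hu, rfl⟩ := List.mem_map.1 hs
    exact hx u (hmemL u hu)
  · intro s hs
    obtain ⟨u, hu, rfl⟩ := List.mem_map.1 hs
    obtain ⟨qs, hqs⟩ := hfl u (hmemL u hu)
    refine ⟨qs, ?_⟩
    have h1 : v.drop d = u.1.drop d ++ ([false] ++ List.replicate u.2 true ++ ([false] ++ qs)) := by
      have hv2 : v = u.1 ++ ([false] ++ List.replicate u.2 true ++ ([false] ++ qs)) := by
        rw [hqs]; simp
      rw [hv2, List.drop_append_of_le_length (hlen u hu)]
    rw [← hdropv, h1]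
    simp [hd]
  · rw [List.pairwise_map]
    refine hMd.imp_of_mem ?_
    intro s u hs hu hsu
    have h1 := hlen s hs
    have h2 := hlen u hu
    have hps := hx s (hmemL s hs)
    have hpu := hx u (hmemL u hu)
    rw [Iv, Iv, disj_iff hps hpu] at hsu
    rw [Iv, Iv]
    simp only [List.length_drop]
    rw [disj_iff hps hpu]
    omega

private theorem count_lb : ∀ (n : ℕ) (L : List (List Bool × ℕ)) (v : List Bool),
    L.length = n →
    (∀ t ∈ L, 0 < t.2) →
    (∀ t ∈ L, Flanked v t) →
    L.Pairwise (fun s t => Disjoint (Iv s) (Iv t)) →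
    (L.map Prod.snd).sum ≤ v.count true := by
  intro n
  induction n with
  | zero =>
    intro L v hL _ _ _
    rw [List.length_eq_zero_iff] at hL
    subst hL
    simp
  | succ n IH =>
    intro L v hL hx hfl hdisj
    have hne : L ≠ [] := by intro h; subst h; simp at hL
    obtain ⟨t, L₁, L₂, q, rfl, hq, hx', hfl', hdisj'⟩ := step_lemma L v hx hfl hdisj hne
    have hlen' : ((L₁ ++ L₂).map (fun s => (s.1.drop (t.1.length + 1 + t.2), s.2))).length = n := by
      simp at hL ⊢; omega
    have hIH := IH _ (false :: q) hlen' hx' hfl' hdisj'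
    rw [List.map_map] at hIH
    have hsum : (((L₁ ++ L₂)).map ((Prod.snd) ∘ (fun s : List Bool × ℕ =>
        (s.1.drop (t.1.length + 1 + t.2), s.2)))).sum = ((L₁ ++ L₂).map Prod.snd).sum := rfl
    rw [hsum] at hIH
    rw [hq]
    simp only [List.count_append, List.map_append, List.sum_append, List.map_cons,
      List.sum_cons, List.count_replicate, List.count_cons, List.count_nil] at *
    simp at hIH ⊢
    omega

private theorem main_aux : ∀ (n : ℕ) (L : List (List Bool × ℕ)) (v : List Bool),
    L.length = n →
    (∀ t ∈ L, 0 < t.2) →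
    (∀ t ∈ L, Flanked v t) →
    L.Pairwise (fun s t => Disjoint (Iv s) (Iv t)) →
    v.count true = (L.map Prod.snd).sum →
    List.Perm (trueRuns v) (L.map Prod.snd) := by
  intro n
  induction n with
  | zero =>
    intro L v hL _ _ _ hcount
    rw [List.length_eq_zero_iff] at hL
    subst hL
    simp only [List.map_nil, List.sum_nil] at hcount
    rw [trueRuns_of_not_mem (List.count_eq_zero.1 hcount)]
    simp
  | succ n IH =>
    intro L v hL hx hfl hdisj hcount
    have hne : L ≠ [] := by intro h; subst h; simp at hL
    obtain ⟨t, L₁, L₂, q, rfl, hq, hx', hfl', hdisj'⟩ := step_lemma L v hx hfl hdisj hne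
    set M := (L₁ ++ L₂).map (fun s => (s.1.drop (t.1.length + 1 + t.2), s.2)) with hM
    have hlen' : M.length = n := by simp [hM] at hL ⊢; omega
    have hMsnd : M.map Prod.snd = (L₁ ++ L₂).map Prod.snd := by
      rw [hM, List.map_map]; rfl
    -- count lower bound on false :: q
    have hlb := count_lb n M (false :: q) hlen' hx' hfl' hdisj'
    rw [hMsnd] at hlb
    -- count identity
    have hcv : v.count true = t.1.count true + t.2 + (false :: q).count true := by
      rw [hq]
      simp [List.count_append, List.count_replicate]
      omega
    have hsumL : ((L₁ ++ t :: L₂).map Prod.snd).sum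
        = t.2 + ((L₁ ++ L₂).map Prod.snd).sum := by
      simp [List.sum_append]
      omega
    have hp0 : t.1.count true = 0 := by omega
    have hq0 : (false :: q).count true = ((L₁ ++ L₂).map Prod.snd).sum := by omega
    -- IH
    have hIH := IH M (false :: q) hlen' hx' hfl' hdisj' (by rw [hMsnd]; exact hq0)
    rw [hMsnd] at hIH
    -- trueRuns v computation
    obtain ⟨m, hm⟩ := Nat.exists_eq_succ_of_ne_zero (show t.2 ≠ 0 by
      have := hx t (by simp); omega)
    have htr : trueRuns v = t.2 :: trueRuns (false :: q) := by
      rw [hq, show t.1 ++ [false] ++ List.replicate t.2 true ++ [false] ++ q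
        = t.1 ++ (false :: (List.replicate t.2 true ++ false :: q)) by simp]
      rw [trueRuns_prefix_false (List.count_eq_zero.1 hp0), trueRuns_false_cons, hm,
        trueRuns_replicate, trueRuns_false_cons]
    rw [htr]
    refine List.Perm.trans (hIH.cons t.2) ?_
    simp only [List.map_append, List.map_cons]
    exact List.perm_middle.symm


/-- Phase 1 soundness: if the verifier has seen `k` pairwise disjoint flanked black
blocks of lengths `x_1, ..., x_k` in `v`, and `v` has no black cells outside them
(its total number of `true` entries is `x_1 + ... + x_k`), then the maximal black
blocks of `v` are exactly these `k` blocks, i.e. the multiset of true-run lengths of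
`v` is `{x_1, ..., x_k}`. -/
theorem phase1_soundness (v : List Bool) (x : List ℕ) (hx : ∀ a ∈ x, 0 < a)
    (p q : Fin x.length → List Bool)
    (hdecomp : ∀ i : Fin x.length,
      v = p i ++ [false] ++ List.replicate (x.get i) true ++ [false] ++ q i)
    (hdisj : ∀ i j : Fin x.length, i ≠ j →
      Disjoint (Finset.Ico ((p i).length + 1) ((p i).length + 1 + x.get i))
        (Finset.Ico ((p j).length + 1) ((p j).length + 1 + x.get j)))
    (hcount : v.count true = x.sum) :
    (↑(trueRuns v) : Multiset ℕ) = (↑x : Multiset ℕ) := by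
  set L : List (List Bool × ℕ) := List.ofFn (fun i => (p i, x.get i)) with hL
  have hLsnd : L.map Prod.snd = x := by
    rw [hL, List.map_ofFn]
    exact List.ofFn_get x
  rw [Multiset.coe_eq_coe, ← hLsnd]
  apply main_aux L.length L v rfl
  · intro t ht
    rw [hL, List.mem_ofFn] at ht
    obtain ⟨i, rfl⟩ := ht
    exact hx _ (x.get_mem _)
  · intro t ht
    rw [hL, List.mem_ofFn] at ht
    obtain ⟨i, rfl⟩ := ht
    exact ⟨q i, hdecomp i⟩
  · rw [hL]
    rw [List.pairwise_ofFn]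
    intro i j hij
    exact hdisj i j (ne_of_lt hij)
  · rw [hLsnd]; exact hcount
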